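/- For the function k(z) = z^p(1+Bδz)^{(A-B)(p-β)/B} with B ≠ 0, |δ| = 1, the n-th Taylor coefficient (n ≥ p+1) has modulus exactly ∏_{j=1}^{n-p} |A(p-β) - B(p-β+j-1)|/j, so when A(p-β) - B(n-β-1) > n-p-1 the bound |a_n| ≤ ∏_{j=1}^{n-p} (A(p-β) - B(p-β+j-1))/j is attained. -/

import Mathlib

/-!
Since `|Bδz| ≤ |z| < 1` on the unit disk, the binomial series gives
`k(z) = Σₘ binom(c, m) (Bδ)^m z^(m+p)` with `c = (A-B)(p-β)/B`, so by uniqueness of power series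
coefficients `a_n = binom(c, n-p) (Bδ)^(n-p)`. Writing `binom(c, m) B^m = ∏_{j=1}^m B(c-j+1)/j` and
`B(c-j+1) = A(p-β) - B(p-β+j-1)` gives the modulus; under the extra hypothesis every factor is
positive because `B ≥ -1`.
-/

open Metric Complex

theorem Ring.succ_mul_choose_succ {K : Type*} [Field K] [CharZero K] (c : K) (m : ℕ) :
    ((m : K) + 1) * Ring.choose c (m + 1) = Ring.choose c m * (c - m) := by
  simp only [Ring.choose_eq_smul, smul_eq_mul, descPochhammer_succ_right, Polynomial.smeval_mul,
    Polynomial.smeval_sub, Polynomial.smeval_X, Polynomial.smeval_natCast, Nat.factorial_succ]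
  push_cast
  field_simp
  ring

open Finset in
theorem Ring.choose_mul_pow_eq_prod_Icc {K : Type*} [Field K] [CharZero K] (c x : K) (m : ℕ) :
    Ring.choose c m * x ^ m = ∏ j ∈ Icc 1 m, x * (c - (j - 1)) / j := by
  induction m with
  | zero => simp
  | succ m ih =>
    rw [prod_Icc_succ_top (by omega), ← ih]
    push_cast
    field_simp
    linear_combination x ^ m * x * Ring.succ_mul_choose_succ c m

section PowerSeries

variable {𝕜 : Type*} [RCLike 𝕜]

theorem le_radius_ofScalars_of_summable {a : ℕ → 𝕜} {r : NNReal}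
    (h : ∀ z ∈ ball (0 : 𝕜) r, Summable fun n ↦ a n * z ^ n) :
    (r : ENNReal) ≤ (FormalMultilinearSeries.ofScalars 𝕜 a).radius := by
  refine ENNReal.le_of_forall_nnreal_lt fun t ht ↦ ?_
  have ht' : ((t : ℝ) : 𝕜) ∈ ball (0 : 𝕜) r := by
    simpa [RCLike.norm_ofReal] using ht
  refine FormalMultilinearSeries.le_radius_of_tendsto _ (l := 0) ?_
  simpa [FormalMultilinearSeries.ofScalars_norm, RCLike.norm_ofReal] using
    (h _ ht').tendsto_atTop_zero.norm

theorem hasFPowerSeriesOnBall_ofScalars_of_hasSum {f : 𝕜 → 𝕜} {a : ℕ → 𝕜} {r : NNReal}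
    (hr : 0 < r) (h : ∀ z ∈ ball (0 : 𝕜) r, HasSum (fun n ↦ a n * z ^ n) (f z)) :
    HasFPowerSeriesOnBall f (FormalMultilinearSeries.ofScalars 𝕜 a) 0 r where
  r_le := le_radius_ofScalars_of_summable fun z hz ↦ (h z hz).summable
  r_pos := by exact_mod_cast hr
  hasSum {y} hy := by
    rw [zero_add]
    simpa [FormalMultilinearSeries.ofScalars_apply_eq, mul_comm] using h y (by simpa using hy)

theorem eq_of_hasSum_mul_pow {f : 𝕜 → 𝕜} {a b : ℕ → 𝕜} {r : NNReal} (hr : 0 < r)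
    (ha : ∀ z ∈ ball (0 : 𝕜) r, HasSum (fun n ↦ a n * z ^ n) (f z))
    (hb : ∀ z ∈ ball (0 : 𝕜) r, HasSum (fun n ↦ b n * z ^ n) (f z)) : a = b :=
  FormalMultilinearSeries.ofScalars_series_injective 𝕜 (E := 𝕜) <|
    (hasFPowerSeriesOnBall_ofScalars_of_hasSum hr ha).hasFPowerSeriesAt.eq_formalMultilinearSeries
      (hasFPowerSeriesOnBall_ofScalars_of_hasSum hr hb).hasFPowerSeriesAt

end PowerSeries

theorem HasSum.pow_mul_of_mul_pow {R : Type*} [CommSemiring R] [TopologicalSpace R]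
    [IsTopologicalSemiring R] {a : ℕ → R} {z s : R} (p : ℕ) (h : HasSum (fun n ↦ a n * z ^ n) s) :
    HasSum (fun n ↦ (if p ≤ n then a (n - p) else 0) * z ^ n) (z ^ p * s) := by
  rw [← (add_left_injective p).hasSum_iff]
  · have hshift : (fun n ↦ (if p ≤ n then a (n - p) else 0) * z ^ n) ∘ (· + p) =
        fun n ↦ z ^ p * (a n * z ^ n) := by
      funext n
      simp only [Function.comp_apply, le_add_iff_nonneg_left, zero_le, if_true,
        add_tsub_cancel_right, pow_add]
      ring
    rw [hshift]
    exact h.mul_left _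
  · intro n hn
    simp only [Set.mem_range, not_exists] at hn
    rw [if_neg fun hpn ↦ hn (n - p) (by omega), zero_mul]

theorem Complex.hasSum_choose_mul_pow {c w : ℂ} (hw : ‖w‖ < 1) :
    HasSum (fun n ↦ Ring.choose c n * w ^ n) ((1 + w) ^ c) := by
  have := one_add_cpow_hasFPowerSeriesOnBall_zero (a := c) |>.hasSum (y := w)
    (by rwa [mem_eball_zero_iff, ← ofReal_norm, ENNReal.ofReal_lt_one])
  simpa [binomialSeries, FormalMultilinearSeries.ofScalars_apply_eq, mul_comm] using this

theorem norm_mul_lt_one_of_mem_ball {E : Type*} [SeminormedRing E] {u z : E} (hu : ‖u‖ ≤ 1)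
    (hz : z ∈ ball (0 : E) 1) : ‖u * z‖ < 1 :=
  (norm_mul_le u z).trans_lt <|
    (mul_le_of_le_one_left (norm_nonneg z) hu).trans_lt (mem_ball_zero_iff.1 hz)

theorem Complex.hasSum_pow_mul_one_add_mul_cpow {c u z : ℂ} (p : ℕ) (hu : ‖u‖ ≤ 1)
    (hz : z ∈ ball (0 : ℂ) 1) :
    HasSum (fun n ↦ (if p ≤ n then Ring.choose c (n - p) * u ^ (n - p) else 0) * z ^ n)
      (z ^ p * (1 + u * z) ^ c) := by
  have hg : HasSum (fun n ↦ Ring.choose c n * u ^ n * z ^ n) ((1 + u * z) ^ c) := by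
    simpa only [mul_pow, mul_assoc] using
      Complex.hasSum_choose_mul_pow (norm_mul_lt_one_of_mem_ball hu hz)
  exact hg.pow_mul_of_mul_pow p

theorem Complex.coeff_eq_of_pow_mul_one_add_mul_cpow_eq_tsum {c u : ℂ} {a : ℕ → ℂ} (p : ℕ)
    (hu : ‖u‖ ≤ 1) (ha : ∀ z ∈ ball (0 : ℂ) 1, z ^ p * (1 + u * z) ^ c = ∑' m, a m * z ^ m)
    {n : ℕ} (hn : p ≤ n) : a n = Ring.choose c (n - p) * u ^ (n - p) := by
  have ha_hasSum : ∀ z ∈ ball (0 : ℂ) 1,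
      HasSum (fun n ↦ a n * z ^ n) (z ^ p * (1 + u * z) ^ c) := by
    intro z hz
    rw [ha z hz]
    -- `ha` only speaks about `tsum`; summability comes from the sum vanishing only at `0`.
    refine Summable.hasSum ?_
    rcases eq_or_ne z 0 with rfl | hz0
    · exact summable_of_ne_finset_zero (s := {0}) fun n hn ↦ by simp_all
    · by_contra hns
      have hne : z ^ p * (1 + u * z) ^ c ≠ 0 := by
        refine mul_ne_zero (pow_ne_zero _ hz0) (cpow_ne_zero_iff.2 (Or.inl ?_))
        exact slitPlane_ne_zero (mem_slitPlane_of_norm_lt_one (norm_mul_lt_one_of_mem_ball hu hz))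
      exact hne (by rw [ha z hz, tsum_eq_zero_of_not_summable hns])
  simpa [hn] using congrFun (eq_of_hasSum_mul_pow one_pos ha_hasSum
    fun z hz ↦ hasSum_pow_mul_one_add_mul_cpow p hu hz) n

theorem stmt_17_general (p : ℕ) (A B β : ℝ)
    (hB : -1 ≤ B) (hBA : B < A) (hA : A ≤ 1)
    (hB0 : B ≠ 0) (δ : ℂ) (hδ : ‖δ‖ = 1) (k : ℂ → ℂ)
    (hk : ∀ z : ℂ, k z = z ^ p * (1 + (B : ℂ) * δ * z) ^ ((((A - B) * ((p : ℝ) - β) / B : ℝ)) : ℂ))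
    (a : ℕ → ℂ) (ha : ∀ z ∈ ball (0:ℂ) 1, k z = ∑' m : ℕ, a m * z ^ m) :
    (∀ n : ℕ, p + 1 ≤ n →
      ‖a n‖ = ∏ j ∈ Finset.Icc 1 (n - p),
        |A * ((p : ℝ) - β) - B * ((p : ℝ) - β + (j : ℝ) - 1)| / (j : ℝ)) ∧
    (∀ n : ℕ, p + 1 ≤ n →
      A * ((p : ℝ) - β) - B * ((n : ℝ) - β - 1) > (n : ℝ) - (p : ℝ) - 1 →
      ‖a n‖ = ∏ j ∈ Finset.Icc 1 (n - p),
        (A * ((p : ℝ) - β) - B * ((p : ℝ) - β + (j : ℝ) - 1)) / (j : ℝ)) := by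
  have hu : ‖(B : ℂ) * δ‖ = |B| := by rw [norm_mul, hδ, mul_one, norm_real, Real.norm_eq_abs]
  have hnorm : ∀ n, p ≤ n → ‖a n‖ = ∏ j ∈ Finset.Icc 1 (n - p),
      |A * ((p : ℝ) - β) - B * ((p : ℝ) - β + (j : ℝ) - 1)| / (j : ℝ) := fun n hn ↦ by
    rw [coeff_eq_of_pow_mul_one_add_mul_cpow_eq_tsum p (hu ▸ abs_le.2 ⟨hB, by linarith⟩)
        (fun z hz ↦ (hk z).symm.trans (ha z hz)) hn,
      norm_mul, norm_pow, hu, ← ofReal_choose, norm_real, Real.norm_eq_abs, ← abs_pow, ← abs_mul,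
      Ring.choose_mul_pow_eq_prod_Icc, Finset.abs_prod]
    refine Finset.prod_congr rfl fun j _ ↦ ?_
    rw [abs_div, Nat.abs_cast]
    congr 2
    linear_combination (mul_div_cancel₀ ((A - B) * ((p : ℝ) - β)) hB0)
  refine ⟨fun n hn ↦ hnorm n (by omega), fun n hn hpos ↦ ?_⟩
  rw [hnorm n (by omega)]
  refine Finset.prod_congr rfl fun j hj ↦ ?_
  obtain ⟨hj1, hjn⟩ : 1 ≤ (j : ℝ) ∧ (j : ℝ) + p ≤ n := by
    rw [Finset.mem_Icc] at hj
    exact ⟨by exact_mod_cast hj.1, by exact_mod_cast (by omega : j + p ≤ n)⟩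
  -- each factor is `(lhs of hpos) + B (n - p - j)`, which exceeds `j - 1` as `B ≥ -1`
  rw [abs_of_nonneg]
  nlinarith [mul_le_mul_of_nonneg_right hB (by linarith : (0 : ℝ) ≤ n - p - j)]

theorem stmt_17 (p : ℕ) (hp : 1 ≤ p) (A B β : ℝ)
    (hB : -1 ≤ B) (hBA : B < A) (hA : A ≤ 1) (hβ0 : 0 ≤ β) (hβ1 : β < 1)
    (hB0 : B ≠ 0) (δ : ℂ) (hδ : ‖δ‖ = 1) (k : ℂ → ℂ)
    (hk : ∀ z : ℂ, k z = z ^ p * (1 + (B : ℂ) * δ * z) ^ ((((A - B) * ((p : ℝ) - β) / B : ℝ)) : ℂ))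
    (a : ℕ → ℂ) (ha : ∀ z ∈ ball (0:ℂ) 1, k z = ∑' m : ℕ, a m * z ^ m) :
    (∀ n : ℕ, p + 1 ≤ n →
      ‖a n‖ = ∏ j ∈ Finset.Icc 1 (n - p),
        |A * ((p : ℝ) - β) - B * ((p : ℝ) - β + (j : ℝ) - 1)| / (j : ℝ)) ∧
    (∀ n : ℕ, p + 1 ≤ n →
      A * ((p : ℝ) - β) - B * ((n : ℝ) - β - 1) > (n : ℝ) - (p : ℝ) - 1 →
      ‖a n‖ = ∏ j ∈ Finset.Icc 1 (n - p),
        (A * ((p : ℝ) - β) - B * ((p : ℝ) - β + (j : ℝ) - 1)) / (j : ℝ)) :=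
  stmt_17_general p A B β hB hBA hA hB0 δ hδ k hk a ha
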